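/- arXiv:2301.04403 — 2 statements merged into one kernel-verified Lean document; each statement's English description precedes it below -/
import Mathlib

section
/- There exists a constant C > 0 such that for all f, g ∈ H¹(𝕋): ‖J^{−1}( g · (J f) )‖ ≤ C min{ ‖f‖ ‖g‖₁, ‖f‖₁ ‖g‖ }. -/
open MeasureTheory Complex

noncomputable section

local notation "𝕋" => AddCircle (2 * Real.pi)

instance : Fact (0 < 2 * Real.pi) := ⟨by positivity⟩

def fc (f : 𝕋 → ℂ) (k : ℤ) : ℂ := fourierCoeff f k

def sNormSq (α : ℝ) (f : 𝕋 → ℂ) : ℝ :=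
  ∑' k : ℤ, (1 + (k : ℝ) ^ 2) ^ α * ‖fc f k‖ ^ 2

def sNorm (α : ℝ) (f : 𝕋 → ℂ) : ℝ := Real.sqrt (sNormSq α f)

def MemH (α : ℝ) (f : 𝕋 → ℂ) : Prop :=
  MemLp f 2 volume ∧ Summable fun k : ℤ => (1 + (k : ℝ) ^ 2) ^ α * ‖fc f k‖ ^ 2

def mulOp (m : ℤ → ℂ) (f : 𝕋 → ℂ) : 𝕋 → ℂ :=
  fun x => ∑' k : ℤ, m k * fc f k * fourier k x

def cconj (f : 𝕋 → ℂ) : 𝕋 → ℂ := fun x => (starRingEnd ℂ) (f x)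

/-- Bessel potential `J^α`, with symbol `(1+k²)^{α/2}`. -/
def Jop (α : ℝ) : (𝕋 → ℂ) → (𝕋 → ℂ) :=
  mulOp fun k => (((1 + (k : ℝ) ^ 2) ^ (α / 2) : ℝ) : ℂ)

/-- The operator `|∂ₓ|^α`, with symbol `|k|^α` for `k ≠ 0`, annihilating the zero mode. -/
def absD (α : ℝ) : (𝕋 → ℂ) → (𝕋 → ℂ) :=
  mulOp fun k => if k = 0 then 0 else ((|(k : ℝ)| ^ α : ℝ) : ℂ)

/-- `∂ₓ^m` for `m : ℤ`: symbol `(ik)^m` for `k ≠ 0`, annihilating the zero mode. -/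
def Dpow (m : ℤ) : (𝕋 → ℂ) → (𝕋 → ℂ) :=
  mulOp fun k => if k = 0 then 0 else (Complex.I * (k : ℂ)) ^ m

/-- Symbol of `⟨∂ₓ²⟩`: `√(k² + k⁴)`. -/
def brSym (k : ℤ) : ℝ := Real.sqrt ((k : ℝ) ^ 2 + (k : ℝ) ^ 4)

/-- `e^{it∂ₓ²}`, with symbol `e^{-itk²}`. -/
def eitDxx (t : ℝ) : (𝕋 → ℂ) → (𝕋 → ℂ) :=
  mulOp fun k => Complex.exp (-(Complex.I * t * (k : ℂ) ^ 2))

/-- `e^{it∂ₓ²} - 1`, with symbol `e^{-itk²} - 1`. -/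
def eitDxxm1 (t : ℝ) : (𝕋 → ℂ) → (𝕋 → ℂ) :=
  mulOp fun k => Complex.exp (-(Complex.I * t * (k : ℂ) ^ 2)) - 1

/-- `⟨∂ₓ²⟩⁻¹`, symbol `(k²+k⁴)^{-1/2}` for `k ≠ 0`, `0` at `k = 0`. -/
def brInv : (𝕋 → ℂ) → (𝕋 → ℂ) :=
  mulOp fun k => if k = 0 then 0 else (((brSym k)⁻¹ : ℝ) : ℂ)

/-- Symbol of `A = ⟨∂ₓ²⟩ + ∂ₓ²`: `√(k²+k⁴) - k²`. -/
def Asym (k : ℤ) : ℝ := brSym k - (k : ℝ) ^ 2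

/-- `A = ⟨∂ₓ²⟩ + ∂ₓ²`. -/
def Aop : (𝕋 → ℂ) → (𝕋 → ℂ) := mulOp fun k => ((Asym k : ℝ) : ℂ)

/-- `e^{itA} - 1`. -/
def eitAm1 (t : ℝ) : (𝕋 → ℂ) → (𝕋 → ℂ) :=
  mulOp fun k => Complex.exp (Complex.I * t * ((Asym k : ℝ) : ℂ)) - 1

/-- Symbol of `B = ⟨∂ₓ²⟩⁻¹ ∂ₓ²`: `-k²/√(k²+k⁴)` for `k ≠ 0`, `0` at `k = 0`. -/
def Bsym (k : ℤ) : ℝ := if k = 0 then 0 else -(k : ℝ) ^ 2 / brSym k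

/-- `B = ⟨∂ₓ²⟩⁻¹ ∂ₓ²`. -/
def Bop : (𝕋 → ℂ) → (𝕋 → ℂ) := mulOp fun k => ((Bsym k : ℝ) : ℂ)

/-- `e^{it⟨∂ₓ²⟩}`, with symbol `e^{it√(k²+k⁴)}`. -/
def eitBr (t : ℝ) : (𝕋 → ℂ) → (𝕋 → ℂ) :=
  mulOp fun k => Complex.exp (Complex.I * t * ((brSym k : ℝ) : ℂ))

/-- `e^{it⟨∂ₓ²⟩} - 1`. -/
def eitBrm1 (t : ℝ) : (𝕋 → ℂ) → (𝕋 → ℂ) :=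
  mulOp fun k => Complex.exp (Complex.I * t * ((brSym k : ℝ) : ℂ)) - 1

/-- `B^τ = B e^{iτ⟨∂ₓ²⟩}`, as a single multiplier. -/
def Btau (τ : ℝ) : (𝕋 → ℂ) → (𝕋 → ℂ) :=
  mulOp fun k => ((Bsym k : ℝ) : ℂ) * Complex.exp (Complex.I * τ * ((brSym k : ℝ) : ℂ))

/-- `ψ₁(y) = ∫₀¹ e^{ys} ds`. -/
def psi1 (y : ℂ) : ℂ := ∫ s in (0 : ℝ)..1, Complex.exp (y * s)

/-- `ψ₁(it∂ₓ²)`, with symbol `ψ₁(-itk²)`. -/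
def psiOp (t : ℝ) : (𝕋 → ℂ) → (𝕋 → ℂ) :=
  mulOp fun k => psi1 (-(Complex.I * t * (k : ℂ) ^ 2))

/-- Sobolev norm (squared) of a Fourier coefficient sequence. -/
def seqNormSq (α : ℝ) (c : ℤ → ℂ) : ℝ :=
  ∑' k : ℤ, (1 + (k : ℝ) ^ 2) ^ α * ‖c k‖ ^ 2

def seqNorm (α : ℝ) (c : ℤ → ℂ) : ℝ := Real.sqrt (seqNormSq α c)

/-- Fourier coefficients of `P₁^τ(f)`. -/
def P1coef (τ : ℝ) (f : 𝕋 → ℂ) (k : ℤ) : ℂ :=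
  if k = 0 then 0 else
    ∑' k₁ : ℤ, ((k₁ : ℂ) ^ 2 / (k : ℂ) ^ 2) *
      (∫ s in (0 : ℝ)..τ,
        (Complex.exp (-(2 * Complex.I * s * (((k - k₁ : ℤ)) : ℂ) ^ 2)) - 1) *
        (Complex.exp (-(2 * Complex.I * s * (k : ℂ) * (k₁ : ℂ))) - 1)) *
      fc (cconj f) k₁ * fc (cconj f) (k - k₁)

/-- Fourier coefficients of `P₂^τ(f)`. -/
def P2coef (τ : ℝ) (f : 𝕋 → ℂ) (k : ℤ) : ℂ :=
  if k = 0 then 0 else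
    ∑' k₁ : ℤ, ((2 * (k₁ : ℂ) * (((k - k₁ : ℤ)) : ℂ)) / (k : ℂ) ^ 2) *
      (∫ s in (0 : ℝ)..τ,
        (Complex.exp (-(2 * Complex.I * s * (k : ℂ) ^ 2)) - 1) *
        (Complex.exp (2 * Complex.I * s * (k₁ : ℂ) * (((k - k₁ : ℤ)) : ℂ)) - 1)) *
      fc (cconj f) k₁ * fc (cconj f) (k - k₁)

def L1op (τ : ℝ) (f : 𝕋 → ℂ) : 𝕋 → ℂ :=
  (-(Complex.I / 2)) • Dpow (-2) ((eitDxx (2 * τ) (Dpow (-2) (cconj f))) * (Dpow 2 (cconj f)))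
    + (Complex.I / 2) • Dpow (-2) ((Dpow 2 (cconj f)) * (Dpow (-2) (cconj f)))

def L2op (τ : ℝ) (f : 𝕋 → ℂ) : 𝕋 → ℂ :=
  (-(Complex.I / 2)) • eitDxx τ (Dpow (-3) ((eitDxx τ (Dpow 1 (cconj f))) * (eitDxx (-τ) (cconj f))))
    + (Complex.I / 2) • Dpow (-3) ((Dpow 1 (cconj f)) * (cconj f))
    - (τ : ℂ) • Dpow (-2) ((Dpow 2 (cconj f)) * (cconj f))

def L3op (τ : ℝ) (f : 𝕋 → ℂ) : 𝕋 → ℂ :=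
  (-Complex.I) • Dpow (-4) (eitDxxm1 (2 * τ) ((Dpow 1 (cconj f)) * (Dpow 1 (cconj f))))

def L4op (τ : ℝ) (f : 𝕋 → ℂ) : 𝕋 → ℂ :=
  Complex.I • Dpow (-2) (eitDxx (-τ) ((eitDxx τ (cconj f)) * (eitDxx τ (cconj f))))
    - Complex.I • Dpow (-2) ((cconj f) * (cconj f))
    - ((2 * τ : ℝ) : ℂ) • Dpow (-2) ((Dpow 1 (cconj f)) * (Dpow 1 (cconj f)))

def I1op (τ : ℝ) (f : 𝕋 → ℂ) : 𝕋 → ℂ :=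
  (Complex.I / 2) • ((Dpow (-1) f) * (Dpow (-1) f)
    - eitDxx τ ((eitDxx (-τ) (Dpow (-1) f)) * (eitDxx (-τ) (Dpow (-1) f))))

def I2op (τ : ℝ) (f : 𝕋 → ℂ) : 𝕋 → ℂ :=
  (-(Complex.I / 2)) • eitDxx τ (Dpow (-1) ((eitDxx (-τ) f) * (eitDxx τ (Dpow (-1) (cconj f)))))
    + (Complex.I / 2) • Dpow (-1) (f * (Dpow (-1) (cconj f)))
    + fun _ => ((τ * sNormSq 0 f : ℝ) : ℂ)

/-- The first-order low regularity exponential integrator `Ψ₁^τ` at time level `t_n`. -/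
def Psi1 (τ a b tn : ℝ) (f : 𝕋 → ℂ) : 𝕋 → ℂ :=
  eitBr τ f
    - (Complex.I / 4) • Btau τ ((2 : ℂ) • L1op τ f + (2 : ℂ) • L2op τ f + L3op τ f
        + L4op τ f + I1op τ f + (2 : ℂ) • I2op τ f)
    - (Complex.I * τ * ((a * tn + b : ℝ) : ℂ)) • Btau τ (f + psiOp (2 * τ) (cconj f))

/-- The additional-regularity exponent `p(r)` (with parameter `ε` standing for `+`). -/
def preg (ε r : ℝ) : ℝ :=
  if r = 1 then 1
  else if r ≤ 7/6 then 3 - 2*r + ε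
  else if r ≤ 17/12 then 2/3
  else if r ≤ 3/2 then 7/2 - 2*r + ε
  else if r < 5/2 then 5/4 - r/2
  else if r = 5/2 then ε
  else 0

/-- The additional-regularity exponent `q(r)` for `P₂`. -/
def qreg (r : ℝ) : ℝ := if r ≤ 5/2 then 5/4 - r/2 else 0


open scoped ENNReal

local notation "μh" => (AddCircle.haarAddCircle : Measure 𝕋)

/-!
Write `a = |ĝ|`, `b = |f̂|` and `⟨k⟩ = √(1 + k²)`. The `k`-th Fourier coefficient of `g · J f` is
bounded by the convolution `(a ∗ ⟨·⟩b)(k)`, so `‖J⁻¹(g · J f)‖² ≤ ∑ₖ ⟨k⟩⁻² (a ∗ ⟨·⟩b)(k)²`.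
Cauchy–Schwarz bounds every value of the convolution by `‖a‖₂ ‖⟨·⟩b‖₂ = ‖g‖ ‖f‖₁`, and
`∑ₖ ⟨k⟩⁻² < ∞`. For the other bound, `⟨l⟩ ≤ ⟨k - l⟩ + ⟨k⟩` moves the weight onto `a`: the part
with `⟨k - l⟩` is treated as before, while in the part with `⟨k⟩` the weight cancels `⟨k⟩⁻¹`, and
Young's inequality `‖a ∗ b‖₂ ≤ ‖a‖₁ ‖b‖₂` together with `‖a‖₁ ≤ (∑ₖ ⟨k⟩⁻²)^{1/2} ‖g‖₁` finishes.

All estimates are carried out in `ℝ≥0∞`, which removes every summability side condition. Where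
the series defining `J f` diverges, `tsum` makes `J f = 0` and the bound holds trivially.
-/

namespace ENNReal

variable {ι : Type*}

theorem tsum_mul_sq_le_sq_mul_sq (F G : ι → ℝ≥0∞) :
    (∑' i, F i * G i) ^ 2 ≤ (∑' i, F i ^ 2) * ∑' i, G i ^ 2 := by
  let _ : MeasurableSpace ι := ⊤
  have h := lintegral_mul_le_Lp_mul_Lq Measure.count .two_two
    (measurable_from_top (f := F)).aemeasurable (measurable_from_top (f := G)).aemeasurable
  simp only [lintegral_count, Pi.mul_apply, rpow_two] at h
  calc (∑' i, F i * G i) ^ 2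
      ≤ ((∑' i, F i ^ 2) ^ (1 / 2 : ℝ) * (∑' i, G i ^ 2) ^ (1 / 2 : ℝ)) ^ 2 := by gcongr
    _ = (∑' i, F i ^ 2) * ∑' i, G i ^ 2 := by
      rw [mul_pow, ← rpow_natCast, ← rpow_natCast, ← rpow_mul, ← rpow_mul]
      norm_num

theorem tsum_sq_le_tsum_inv_sq_mul {ρ : ι → ℝ≥0∞} (hρ₀ : ∀ k, ρ k ≠ 0) (hρ : ∀ k, ρ k ≠ ∞)
    (a : ι → ℝ≥0∞) : (∑' m, a m) ^ 2 ≤ (∑' m, (ρ m)⁻¹ ^ 2) * ∑' m, (ρ m * a m) ^ 2 := by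
  simpa only [← mul_assoc, ENNReal.inv_mul_cancel (hρ₀ _) (hρ _), one_mul] using
    tsum_mul_sq_le_sq_mul_sq (fun m => (ρ m)⁻¹) (fun m => ρ m * a m)

variable [AddGroup ι]

def conv (a b : ι → ℝ≥0∞) (k : ι) : ℝ≥0∞ := ∑' l, a (k - l) * b l

theorem tsum_comp_sub_left (a : ι → ℝ≥0∞) (k : ι) : ∑' l, a (k - l) = ∑' m, a m :=
  (Equiv.subLeft k).tsum_eq a

theorem tsum_comp_sub_right (a : ι → ℝ≥0∞) (l : ι) : ∑' k, a (k - l) = ∑' m, a m :=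
  (Equiv.subRight l).tsum_eq a

theorem conv_sq_le (a b : ι → ℝ≥0∞) (k : ι) :
    conv a b k ^ 2 ≤ (∑' m, a m ^ 2) * ∑' l, b l ^ 2 := by
  rw [← tsum_comp_sub_left (a · ^ 2) k]
  exact tsum_mul_sq_le_sq_mul_sq (a <| k - ·) b

theorem tsum_conv_sq_le (a b : ι → ℝ≥0∞) :
    ∑' k, conv a b k ^ 2 ≤ (∑' m, a m) ^ 2 * ∑' l, b l ^ 2 := by
  have pointwise (k : ι) : conv a b k ^ 2 ≤ (∑' m, a m) * ∑' l, a (k - l) * b l ^ 2 := by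
    have h := tsum_mul_sq_le_sq_mul_sq (fun l => a (k - l) ^ (1 / 2 : ℝ))
      (fun l => a (k - l) ^ (1 / 2 : ℝ) * b l)
    simp only [← mul_assoc, mul_pow, ← pow_two, ← rpow_natCast, ← rpow_mul] at h
    norm_num [tsum_comp_sub_left a k] at h
    exact h
  calc ∑' k, conv a b k ^ 2
      ≤ ∑' k, (∑' m, a m) * ∑' l, a (k - l) * b l ^ 2 := ENNReal.tsum_le_tsum pointwise
    _ = (∑' m, a m) * ∑' l, (∑' k, a (k - l)) * b l ^ 2 := by
      rw [ENNReal.tsum_mul_left, ENNReal.tsum_comm]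
      simp only [ENNReal.tsum_mul_right]
    _ = (∑' m, a m) ^ 2 * ∑' l, b l ^ 2 := by
      simp_rw [tsum_comp_sub_right, ENNReal.tsum_mul_left]
      ring

theorem conv_mul_weight_le {ρ : ι → ℝ≥0∞} (hρ : ∀ k l, ρ l ≤ ρ (k - l) + ρ k)
    (a b : ι → ℝ≥0∞) (k : ι) :
    conv a (fun l => ρ l * b l) k ≤ conv (fun m => ρ m * a m) b k + ρ k * conv a b k := by
  calc conv a (fun l => ρ l * b l) k
      ≤ ∑' l, a (k - l) * ((ρ (k - l) + ρ k) * b l) := by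
        simp only [conv]; gcongr with l; exact hρ k l
    _ = conv (fun m => ρ m * a m) b k + ρ k * conv a b k := by
      simp only [conv, ← ENNReal.tsum_mul_left, ← ENNReal.tsum_add]
      congr 1 with l
      ring

variable (ρ a b : ι → ℝ≥0∞)

theorem tsum_inv_mul_conv_weight_sq_le :
    ∑' k, ((ρ k)⁻¹ * conv a (fun l => ρ l * b l) k) ^ 2
      ≤ (∑' k, (ρ k)⁻¹ ^ 2) * ((∑' l, (ρ l * b l) ^ 2) * ∑' m, a m ^ 2) := by
  calc ∑' k, ((ρ k)⁻¹ * conv a (fun l => ρ l * b l) k) ^ 2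
      ≤ ∑' k, (ρ k)⁻¹ ^ 2 * ((∑' m, a m ^ 2) * ∑' l, (ρ l * b l) ^ 2) := by
        gcongr with k; rw [mul_pow]; gcongr; exact conv_sq_le _ _ k
    _ = _ := by rw [ENNReal.tsum_mul_right, mul_comm (∑' m, a m ^ 2)]

theorem tsum_inv_mul_conv_weight_sq_le_of_le_add (hρ₀ : ∀ k, ρ k ≠ 0) (hρ : ∀ k, ρ k ≠ ∞)
    (hρ_add : ∀ k l, ρ l ≤ ρ (k - l) + ρ k) :
    ∑' k, ((ρ k)⁻¹ * conv a (fun l => ρ l * b l) k) ^ 2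
      ≤ 4 * (∑' k, (ρ k)⁻¹ ^ 2) * ((∑' m, (ρ m * a m) ^ 2) * ∑' l, b l ^ 2) := by
  set S := ∑' k, (ρ k)⁻¹ ^ 2
  have split (k : ι) : (ρ k)⁻¹ * conv a (fun l => ρ l * b l) k
      ≤ (ρ k)⁻¹ * conv (fun m => ρ m * a m) b k + conv a b k := by
    calc (ρ k)⁻¹ * conv a (fun l => ρ l * b l) k
        ≤ (ρ k)⁻¹ * (conv (fun m => ρ m * a m) b k + ρ k * conv a b k) := by
          gcongr; exact conv_mul_weight_le hρ_add a b k
      _ = _ := by rw [mul_add, ← mul_assoc, ENNReal.inv_mul_cancel (hρ₀ k) (hρ k), one_mul]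
  have high : ∑' k, ((ρ k)⁻¹ * conv (fun m => ρ m * a m) b k) ^ 2
      ≤ S * ((∑' m, (ρ m * a m) ^ 2) * ∑' l, b l ^ 2) := by
    calc ∑' k, ((ρ k)⁻¹ * conv (fun m => ρ m * a m) b k) ^ 2
        ≤ ∑' k, (ρ k)⁻¹ ^ 2 * ((∑' m, (ρ m * a m) ^ 2) * ∑' l, b l ^ 2) := by
          gcongr with k; rw [mul_pow]; gcongr; exact conv_sq_le _ _ k
      _ = _ := ENNReal.tsum_mul_right
  have low : ∑' k, conv a b k ^ 2 ≤ S * ((∑' m, (ρ m * a m) ^ 2) * ∑' l, b l ^ 2) := by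
    calc ∑' k, conv a b k ^ 2 ≤ (∑' m, a m) ^ 2 * ∑' l, b l ^ 2 := tsum_conv_sq_le a b
      _ ≤ _ := by
        rw [← mul_assoc]; gcongr; exact tsum_sq_le_tsum_inv_sq_mul hρ₀ hρ a
  calc ∑' k, ((ρ k)⁻¹ * conv a (fun l => ρ l * b l) k) ^ 2
      ≤ ∑' k, 2 * (((ρ k)⁻¹ * conv (fun m => ρ m * a m) b k) ^ 2 + conv a b k ^ 2) := by
        gcongr with k
        have h := rpow_add_le_mul_rpow_add_rpow ((ρ k)⁻¹ * conv (fun m => ρ m * a m) b k)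
          (conv a b k) one_le_two
        norm_num [rpow_two] at h
        exact (pow_le_pow_left' (split k) 2).trans h
    _ ≤ 2 * (S * ((∑' m, (ρ m * a m) ^ 2) * ∑' l, b l ^ 2)
          + S * ((∑' m, (ρ m * a m) ^ 2) * ∑' l, b l ^ 2)) := by
        rw [ENNReal.tsum_mul_left, ENNReal.tsum_add]; gcongr
    _ = _ := by ring

end ENNReal

section FourierCoeff

variable {T : ℝ}

theorem enorm_fourier_apply (n : ℤ) (x : AddCircle T) : ‖fourier n x‖ₑ = 1 := by
  rw [← ofReal_norm, show ‖fourier n x‖ = 1 from Circle.norm_coe _, ENNReal.ofReal_one]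

variable [Fact (0 < T)]

theorem fourierCoeff_fourier_mul (g : AddCircle T → ℂ) (l k : ℤ) :
    fourierCoeff (fun x => fourier l x * g x) k = fourierCoeff g (k - l) := by
  simp only [fourierCoeff, smul_eq_mul, ← mul_assoc, ← fourier_add]
  ring_nf

theorem fourierCoeff_tsum {ι : Type*} [Countable ι] {F : ι → AddCircle T → ℂ}
    (hF : ∀ i, AEStronglyMeasurable (F i) AddCircle.haarAddCircle)
    (hF_sum : ∑' i, ∫⁻ x, ‖F i x‖ₑ ∂AddCircle.haarAddCircle ≠ ∞) (k : ℤ) :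
    fourierCoeff (fun x => ∑' i, F i x) k = ∑' i, fourierCoeff (F i) k := by
  simp only [fourierCoeff, smul_eq_mul, ← tsum_mul_left]
  refine integral_tsum (fun i => (fourier (-k)).continuous.aestronglyMeasurable.mul (hF i)) ?_
  simpa only [enorm_mul, enorm_fourier_apply, one_mul] using hF_sum

theorem fourierCoeff_mul_tsum {g : AddCircle T → ℂ} (hg : Integrable g AddCircle.haarAddCircle)
    {c : ℤ → ℂ} (hc : Summable fun l => ‖c l‖) (k : ℤ) :
    fourierCoeff (fun x => g x * ∑' l, c l * fourier l x) k
      = ∑' l, c l * fourierCoeff g (k - l) := by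
  have hF : ∀ l, AEStronglyMeasurable (fun x => c l * (fourier l x * g x))
      AddCircle.haarAddCircle := fun l =>
    ((fourier l).continuous.aestronglyMeasurable.mul hg.1).const_mul _
  have hF_sum : ∑' l, ∫⁻ x, ‖c l * (fourier l x * g x)‖ₑ ∂AddCircle.haarAddCircle ≠ ∞ := by
    simp only [enorm_mul, enorm_fourier_apply, one_mul, lintegral_const_mul' _ _ enorm_ne_top,
      ENNReal.tsum_mul_right]
    exact ENNReal.mul_ne_top (tsum_enorm_ne_top_iff_summable_norm.2 hc) hg.2.ne
  have hfun : (fun x => g x * ∑' l, c l * fourier l x)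
      = fun x => ∑' l, c l * (fourier l x * g x) := by
    funext x; rw [← tsum_mul_left]; congr with l; ring
  rw [hfun, fourierCoeff_tsum hF hF_sum]
  simp only [fourierCoeff.const_mul, fourierCoeff_fourier_mul]

theorem fourierCoeff_tsum_fourier {c : ℤ → ℂ} (hc : Summable fun l => ‖c l‖) (k : ℤ) :
    fourierCoeff (fun x : AddCircle T => ∑' l, c l * fourier l x) k = c k := by
  have h := fourierCoeff_mul_tsum (T := T) (integrable_const 1) hc k
  have h1 : fourierCoeff (fun _ : AddCircle T => (1 : ℂ)) = Pi.single 0 1 := by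
    rw [← fourierCoeff_fourier (T := T) 0]; congr with x; exact fourier_zero.symm
  simp only [one_mul, h1] at h
  rw [h, tsum_eq_single k (fun l hl => by simp [sub_eq_zero, Ne.symm hl])]
  simp

end FourierCoeff

section MulOp

variable (m : ℤ → ℂ) (f : 𝕋 → ℂ)

theorem mulOp_eq_zero_of_not_summable (h : ¬Summable fun k => ‖m k * fc f k‖) : mulOp m f = 0 := by
  funext x
  refine tsum_eq_zero_of_not_summable fun hs => h ?_
  refine (summable_norm_iff.2 hs).congr fun k => ?_
  rw [norm_mul, show ‖fourier k x‖ = 1 from Circle.norm_coe _, mul_one]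

theorem fc_mulOp (h : Summable fun k => ‖m k * fc f k‖) (k : ℤ) :
    fc (mulOp m f) k = m k * fc f k :=
  fourierCoeff_tsum_fourier h k

theorem enorm_fc_mul_mulOp_le {g : 𝕋 → ℂ} (hg : Integrable g μh) (k : ℤ) :
    ‖fc (g * mulOp m f) k‖ₑ
      ≤ ENNReal.conv (fun j => ‖fc g j‖ₑ) (fun l => ‖m l‖ₑ * ‖fc f l‖ₑ) k := by
  by_cases h : Summable fun l => ‖m l * fc f l‖
  · calc ‖fc (g * mulOp m f) k‖ₑ = ‖∑' l, m l * fc f l * fc g (k - l)‖ₑ :=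
          congrArg _ (fourierCoeff_mul_tsum hg h k)
      _ ≤ _ := enorm_tsum_le_tsum_enorm.trans_eq <| tsum_congr fun l => by
          rw [enorm_mul, enorm_mul, mul_comm]
  · simp [mulOp_eq_zero_of_not_summable m f h, fc, fourierCoeff]

end MulOp

def japaneseBracket (k : ℤ) : ℝ≥0∞ := ENNReal.ofReal √(1 + (k : ℝ) ^ 2)

theorem japaneseBracket_ne_zero (k : ℤ) : japaneseBracket k ≠ 0 := by
  rw [japaneseBracket, ne_eq, ENNReal.ofReal_eq_zero, not_le]; positivity

theorem japaneseBracket_ne_top (k : ℤ) : japaneseBracket k ≠ ∞ := ENNReal.ofReal_ne_top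

theorem ofReal_one_add_sq_rpow (α : ℝ) (k : ℤ) :
    ENNReal.ofReal ((1 + (k : ℝ) ^ 2) ^ α) = japaneseBracket k ^ (2 * α) := by
  rw [japaneseBracket, ENNReal.ofReal_rpow_of_pos (by positivity), Real.sqrt_eq_rpow,
    ← Real.rpow_mul (by positivity)]
  ring_nf

theorem enorm_besselSymbol (α : ℝ) (k : ℤ) :
    ‖(((1 + (k : ℝ) ^ 2) ^ (α / 2) : ℝ) : ℂ)‖ₑ = japaneseBracket k ^ α := by
  rw [← ofReal_norm, Complex.norm_real, Real.norm_of_nonneg (by positivity),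
    ofReal_one_add_sq_rpow]
  ring_nf

theorem japaneseBracket_le_sub_add (k l : ℤ) :
    japaneseBracket l ≤ japaneseBracket (k - l) + japaneseBracket k := by
  rw [japaneseBracket, japaneseBracket, japaneseBracket,
    ← ENNReal.ofReal_add (by positivity) (by positivity)]
  refine ENNReal.ofReal_le_ofReal ?_
  have h (x : ℝ) : √(1 + x ^ 2) = ‖(1 : ℂ) + x * I‖ := by
    rw [← ofReal_one, norm_add_mul_I, one_pow]
  have habs : |((k - l : ℤ) : ℝ)| ≤ √(1 + ((k - l : ℤ) : ℝ) ^ 2) := by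
    rw [← Real.sqrt_sq_eq_abs]; gcongr; exact le_add_of_nonneg_left zero_le_one
  calc √(1 + (l : ℝ) ^ 2) = ‖(1 + (k : ℝ) * I) - ((k - l : ℤ) : ℝ) * I‖ := by
        rw [h]; push_cast; ring_nf
    _ ≤ ‖(1 : ℂ) + (k : ℝ) * I‖ + ‖(((k - l : ℤ) : ℝ) : ℂ) * I‖ := norm_sub_le _ _
    _ ≤ _ := by
      rw [add_comm, norm_mul, norm_I, mul_one, norm_real, ← h, Real.norm_eq_abs]
      gcongr

theorem summable_inv_one_add_sq : Summable fun k : ℤ => (1 + (k : ℝ) ^ 2)⁻¹ := by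
  refine Summable.of_norm_bounded_eventually (Real.summable_one_div_int_pow.2 one_lt_two) ?_
  filter_upwards [Filter.eventually_cofinite_ne 0] with k hk
  have hk2 : (0 : ℝ) < (k : ℝ) ^ 2 := by positivity
  rw [Real.norm_of_nonneg (by positivity), one_div]
  exact inv_anti₀ hk2 (by linarith)

theorem tsum_inv_japaneseBracket_sq_ne_top : ∑' k, (japaneseBracket k)⁻¹ ^ 2 ≠ ∞ := by
  have h (k : ℤ) : (japaneseBracket k)⁻¹ ^ 2 = ENNReal.ofReal (1 + (k : ℝ) ^ 2)⁻¹ := by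
    rw [← Real.rpow_neg_one, ofReal_one_add_sq_rpow, ENNReal.rpow_mul, ENNReal.rpow_two,
      ENNReal.rpow_neg_one, ENNReal.inv_pow]
  simp_rw [h, ← ENNReal.ofReal_tsum_of_nonneg (fun k => by positivity) summable_inv_one_add_sq]
  exact ENNReal.ofReal_ne_top

theorem sNormSq_nonneg (α : ℝ) (f : 𝕋 → ℂ) : 0 ≤ sNormSq α f :=
  tsum_nonneg fun _ => by positivity

theorem ofReal_sNormSq {α : ℝ} {f : 𝕋 → ℂ}
    (h : Summable fun k : ℤ => (1 + (k : ℝ) ^ 2) ^ α * ‖fc f k‖ ^ 2) :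
    ENNReal.ofReal (sNormSq α f) = ∑' k, japaneseBracket k ^ (2 * α) * ‖fc f k‖ₑ ^ 2 := by
  rw [sNormSq, ENNReal.ofReal_tsum_of_nonneg (fun k => by positivity) h]
  congr with k
  rw [ENNReal.ofReal_mul (by positivity), ofReal_one_add_sq_rpow,
    ENNReal.ofReal_pow (norm_nonneg _), ofReal_norm]

theorem ofReal_sNormSq_zero_mulOp_le (m : ℤ → ℂ) (f : 𝕋 → ℂ) :
    ENNReal.ofReal (sNormSq 0 (mulOp m f)) ≤ ∑' k, (‖m k‖ₑ * ‖fc f k‖ₑ) ^ 2 := by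
  by_cases hm : Summable fun k => ‖m k * fc f k‖
  · by_cases hs : Summable fun k : ℤ => (1 + (k : ℝ) ^ 2) ^ (0 : ℝ) * ‖fc (mulOp m f) k‖ ^ 2
    · simp [ofReal_sNormSq hs, fc_mulOp m f hm, mul_pow]
    · rw [sNormSq, tsum_eq_zero_of_not_summable hs, ENNReal.ofReal_zero]
      exact zero_le
  · simp [mulOp_eq_zero_of_not_summable m f hm, sNormSq, fc, fourierCoeff]

theorem MemH.mono {α β : ℝ} {f : 𝕋 → ℂ} (hf : MemH β f) (hαβ : α ≤ β) : MemH α f :=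
  ⟨hf.1, hf.2.of_nonneg_of_le (fun _ => by positivity) fun _ => by
    gcongr; exact le_add_of_nonneg_right (sq_nonneg _)⟩

theorem MemH.integrable {α : ℝ} {f : 𝕋 → ℂ} (hf : MemH α f) : Integrable f μh :=
  (memLp_haarAddCircle_iff.2 hf.1).integrable one_le_two

theorem MemH.ofReal_sNormSq_zero {f : 𝕋 → ℂ} (hf : MemH 1 f) :
    ENNReal.ofReal (sNormSq 0 f) = ∑' k, ‖fc f k‖ₑ ^ 2 := by
  simpa using ofReal_sNormSq (hf.mono zero_le_one).2

theorem MemH.ofReal_sNormSq_one {f : 𝕋 → ℂ} (hf : MemH 1 f) :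
    ENNReal.ofReal (sNormSq 1 f) = ∑' k, (japaneseBracket k * ‖fc f k‖ₑ) ^ 2 := by
  simpa [mul_pow, ENNReal.rpow_two] using ofReal_sNormSq hf.2

theorem ofReal_sNormSq_Jop_neg_one_mul_Jop_one_le {f g : 𝕋 → ℂ} (hg : Integrable g μh) :
    ENNReal.ofReal (sNormSq 0 (Jop (-1) (g * Jop 1 f)))
      ≤ ∑' k, ((japaneseBracket k)⁻¹
          * ENNReal.conv (fun j => ‖fc g j‖ₑ) (fun l => japaneseBracket l * ‖fc f l‖ₑ) k) ^ 2 := by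
  refine (ofReal_sNormSq_zero_mulOp_le _ _).trans (ENNReal.tsum_le_tsum fun k => ?_)
  rw [enorm_besselSymbol, ENNReal.rpow_neg_one]
  gcongr
  have h := enorm_fc_mul_mulOp_le (fun k => (((1 + (k : ℝ) ^ 2) ^ ((1 : ℝ) / 2) : ℝ) : ℂ)) f hg k
  simp only [enorm_besselSymbol, ENNReal.rpow_one] at h
  exact h

theorem sqrt_le_sqrt_mul_sqrt_mul_sqrt_of_ofReal_le {x y z : ℝ} {K : ℝ≥0∞} (hK : K ≠ ∞)
    (hy : 0 ≤ y) (hz : 0 ≤ z)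
    (h : ENNReal.ofReal x ≤ K * (ENNReal.ofReal y * ENNReal.ofReal z)) :
    √x ≤ √K.toReal * (√y * √z) := by
  rw [← ENNReal.ofReal_toReal hK, ← ENNReal.ofReal_mul hy,
    ← ENNReal.ofReal_mul ENNReal.toReal_nonneg, ENNReal.ofReal_le_ofReal_iff (by positivity)] at h
  rw [← Real.sqrt_mul hy, ← Real.sqrt_mul ENNReal.toReal_nonneg]
  exact Real.sqrt_le_sqrt h

theorem stmt7 :
    ∃ C > (0:ℝ), ∀ f g : 𝕋 → ℂ, MemH 1 f → MemH 1 g →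
      sNorm 0 (Jop (-1) (g * Jop 1 f)) ≤
        C * min (sNorm 0 f * sNorm 1 g) (sNorm 1 f * sNorm 0 g) := by
  set S := ∑' k, (japaneseBracket k)⁻¹ ^ 2
  have hK : 4 * S ≠ ∞ := ENNReal.mul_ne_top ENNReal.ofNat_ne_top tsum_inv_japaneseBracket_sq_ne_top
  have hS₀ : S ≠ 0 := ENNReal.summable.tsum_ne_zero_iff.2 ⟨0, by simp [japaneseBracket_ne_top]⟩
  refine ⟨√(4 * S).toReal, Real.sqrt_pos.2 (ENNReal.toReal_pos (by simpa using hS₀) hK),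
    fun f g hf hg => ?_⟩
  have hX := ofReal_sNormSq_Jop_neg_one_mul_Jop_one_le (f := f) hg.integrable
  rw [mul_min_of_nonneg _ _ (Real.sqrt_nonneg _)]
  refine le_min ?_ ?_
  · rw [mul_comm (sNorm 0 f)]
    refine sqrt_le_sqrt_mul_sqrt_mul_sqrt_of_ofReal_le hK (sNormSq_nonneg _ _)
      (sNormSq_nonneg _ _) ?_
    rw [hf.ofReal_sNormSq_zero, hg.ofReal_sNormSq_one]
    exact hX.trans (ENNReal.tsum_inv_mul_conv_weight_sq_le_of_le_add _ _ _
      japaneseBracket_ne_zero japaneseBracket_ne_top japaneseBracket_le_sub_add)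
  · refine sqrt_le_sqrt_mul_sqrt_mul_sqrt_of_ofReal_le hK (sNormSq_nonneg _ _)
      (sNormSq_nonneg _ _) ?_
    rw [hf.ofReal_sNormSq_one, hg.ofReal_sNormSq_zero]
    refine hX.trans ((ENNReal.tsum_inv_mul_conv_weight_sq_le _ _ _).trans ?_)
    gcongr
    exact le_mul_of_one_le_left' (by norm_num)
end
end

section
/- Let r > 1/2, τ ∈ ℝ, and let f ∈ H^r(𝕋) have zero mean, i.e. f̂₀ = 0. Then the following identity holds in L²(𝕋): ∫₀^τ e^{is∂ₓ²} ( (e^{−is∂ₓ²} f)² ) ds = (i/2) [ (∂ₓ^{−1} f)² − e^{iτ∂ₓ²} ( (e^{−iτ∂ₓ²} ∂ₓ^{−1} f)² ) ]. Equivalently, at each Fourier mode k: Σ_{k₁+k₂=k} ( ∫₀^τ e^{−is(k²−k₁²−k₂²)} ds ) f̂_{k₁} f̂_{k₂} equals the k-th Fourier coefficient of the right-hand side. -/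
open MeasureTheory Complex

noncomputable section

local notation "𝕋" => AddCircle (2 * Real.pi)

/-!
Since `r > 1/2`, the Fourier coefficients `c = f̂` are absolutely summable, so every function
involved is an absolutely convergent trigonometric series, and the integrand expands over pairs
of modes `(k, k₁)` with the free Schrödinger phases combining into `e^{-is·2k₁(k-k₁)}`.
Integrating term by term, `∫₀^τ e^{-is·2k₁(k-k₁)} ds · c_{k₁} c_{k-k₁}` equals
`(i/2) (1 - e^{-iτ·2k₁(k-k₁)}) · c_{k₁}/(ik₁) · c_{k-k₁}/(i(k-k₁))`, the `(k, k₁)` term of the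
right-hand side; the resonant pairs `k₁ = 0` and `k₁ = k` drop out because `c₀ = 0`.
-/

lemma norm_fourier_apply {T : ℝ} (n : ℤ) (x : AddCircle T) : ‖fourier n x‖ = 1 :=
  Circle.norm_coe _

lemma norm_exp_neg_I_mul_of_im_eq_zero (t : ℝ) {z : ℂ} (hz : z.im = 0) :
    ‖exp (-(I * t * z))‖ = 1 := by
  simp [Complex.norm_exp, hz]

lemma intervalIntegral_tsum_of_norm_le {ι E : Type*} [Countable ι] [NormedAddCommGroup E]
    [NormedSpace ℝ E] [CompleteSpace E] {u : ι → ℝ → E} {B : ι → ℝ} (hu : ∀ i, Continuous (u i))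
    (hB : Summable B) (hbd : ∀ i s, ‖u i s‖ ≤ B i) (a b : ℝ) :
    ∫ s in a..b, ∑' i, u i s = ∑' i, ∫ s in a..b, u i s :=
  (intervalIntegral.hasSum_integral_of_dominated_convergence (fun i _ => B i)
    (fun i => (hu i).aestronglyMeasurable) (fun i => ae_of_all _ fun s _ => hbd i s)
    (ae_of_all _ fun _ _ => hB) intervalIntegrable_const
    (ae_of_all _ fun s _ => (hB.of_norm_bounded (hbd · s)).hasSum)).tsum_eq.symm

lemma summable_rpow_one_add_sq_inv {r : ℝ} (hr : 1 / 2 < r) :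
    Summable fun k : ℤ => ((1 + (k : ℝ) ^ 2) ^ r)⁻¹ := by
  refine Summable.of_norm_bounded_eventually
    (Real.summable_abs_int_rpow (b := 2 * r) (by linarith)) ?_
  filter_upwards [(Set.finite_singleton (0 : ℤ)).compl_mem_cofinite] with k hk
  have hk2 : 0 < (k : ℝ) ^ 2 := by
    simpa [sq_pos_iff] using (show k ≠ 0 from hk)
  rw [Real.norm_of_nonneg (by positivity), Real.rpow_neg (abs_nonneg _), Real.rpow_mul
    (abs_nonneg _), Real.rpow_two, sq_abs]
  exact inv_anti₀ (Real.rpow_pos_of_pos hk2 r)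
    (Real.rpow_le_rpow hk2.le (by linarith) (by linarith))

lemma summable_norm_of_summable_sobolev {r : ℝ} (hr : 1 / 2 < r) {c : ℤ → ℂ}
    (hc : Summable fun k : ℤ => (1 + (k : ℝ) ^ 2) ^ r * ‖c k‖ ^ 2) : Summable (‖c ·‖) := by
  refine ((summable_rpow_one_add_sq_inv hr).add hc).of_nonneg_of_le (fun _ => norm_nonneg _)
    fun k => ?_
  have hw : 0 < (1 + (k : ℝ) ^ 2) ^ r := by positivity
  refine le_of_mul_le_mul_left ?_ hw
  rw [mul_add, mul_inv_cancel₀ hw.ne']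
  nlinarith [sq_nonneg ((1 + (k : ℝ) ^ 2) ^ r * ‖c k‖ - 1), norm_nonneg (c k)]

lemma fourierCoeff_tsum_mul_fourier {T : ℝ} [Fact (0 < T)] {ι : Type*} [Countable ι]
    {d : ι → ℂ} (hd : Summable (‖d ·‖)) (n : ι → ℤ) (k : ℤ) :
    fourierCoeff (fun x : AddCircle T => ∑' i, d i * fourier (n i) x) k
      = ∑' i, if n i = k then d i else 0 := by
  have hint : ∀ i, Integrable (fun x : AddCircle T => fourier (-k) x • (d i * fourier (n i) x))
      AddCircle.haarAddCircle := fun i =>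
    (by fun_prop : Continuous fun x : AddCircle T => fourier (-k) x • (d i * fourier (n i) x))
      |>.integrable_of_hasCompactSupport (HasCompactSupport.of_compactSpace _)
  have hnorm : Summable fun i =>
      ∫ x : AddCircle T, ‖fourier (-k) x • (d i * fourier (n i) x)‖ ∂AddCircle.haarAddCircle := by
    simp only [norm_smul, norm_mul, norm_fourier_apply, one_mul, mul_one]
    simpa using hd
  calc fourierCoeff (fun x : AddCircle T => ∑' i, d i * fourier (n i) x) k
      = ∫ x : AddCircle T, ∑' i, fourier (-k) x • (d i * fourier (n i) x)
          ∂AddCircle.haarAddCircle := by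
        simp only [fourierCoeff, smul_eq_mul, tsum_mul_left]
    _ = ∑' i, d i * fourierCoeff (fourier (n i) : AddCircle T → ℂ) k := by
        rw [← integral_tsum_of_summable_integral_norm hint hnorm]
        refine tsum_congr fun i => ?_
        simp only [fourierCoeff, smul_eq_mul, mul_left_comm _ (d i), integral_const_mul]
    _ = ∑' i, if n i = k then d i else 0 := by
        simp [fourierCoeff_fourier, Pi.single_apply, eq_comm]

def trigSeries (b : ℤ → ℂ) : 𝕋 → ℂ := fun x => ∑' k : ℤ, b k * fourier k x

lemma fc_trigSeries {b : ℤ → ℂ} (hb : Summable (‖b ·‖)) : fc (trigSeries b) = b := by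
  funext k
  exact (fourierCoeff_tsum_mul_fourier hb id k).trans (tsum_ite_eq k b)

def shearEquiv : ℤ × ℤ ≃ ℤ × ℤ where
  toFun q := (q.2, q.1 - q.2)
  invFun p := (p.1 + p.2, p.1)
  left_inv q := by simp
  right_inv p := by simp

lemma summable_norm_mul_norm_shear {b c : ℤ → ℂ} (hb : Summable (‖b ·‖))
    (hc : Summable (‖c ·‖)) :
    Summable fun q : ℤ × ℤ => ‖b q.2‖ * ‖c (q.1 - q.2)‖ :=
  (shearEquiv.summable_iff (f := fun p : ℤ × ℤ => ‖b p.1‖ * ‖c p.2‖)).mpr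
    (hb.mul_of_nonneg hc (fun _ => norm_nonneg _) (fun _ => norm_nonneg _))

lemma trigSeries_mul_trigSeries_apply {b c : ℤ → ℂ} (hb : Summable (‖b ·‖))
    (hc : Summable (‖c ·‖)) (x : 𝕋) :
    trigSeries b x * trigSeries c x = ∑' q : ℤ × ℤ, b q.2 * c (q.1 - q.2) * fourier q.1 x := by
  have hb' : Summable fun k => ‖b k * fourier k x‖ := by
    simpa only [norm_mul, norm_fourier_apply, mul_one] using hb
  have hc' : Summable fun k => ‖c k * fourier k x‖ := by
    simpa only [norm_mul, norm_fourier_apply, mul_one] using hc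
  rw [trigSeries, trigSeries, tsum_mul_tsum_of_summable_norm hb' hc', ← shearEquiv.tsum_eq]
  refine tsum_congr fun q => ?_
  change b q.2 * fourier q.2 x * (c (q.1 - q.2) * fourier (q.1 - q.2) x) = _
  rw [mul_mul_mul_comm, ← fourier_add, add_sub_cancel]

lemma fc_trigSeries_mul_trigSeries {b c : ℤ → ℂ} (hb : Summable (‖b ·‖))
    (hc : Summable (‖c ·‖)) (k : ℤ) :
    fc (trigSeries b * trigSeries c) k = ∑' j, b j * c (k - j) := by
  have hsum : Summable fun q : ℤ × ℤ => ‖b q.2 * c (q.1 - q.2)‖ := by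
    simpa only [norm_mul] using summable_norm_mul_norm_shear hb hc
  have hfiber : Summable fun q : ℤ × ℤ => if q.1 = k then b q.2 * c (q.1 - q.2) else 0 :=
    hsum.of_norm_bounded fun q => by split_ifs <;> simp; positivity
  calc fc (trigSeries b * trigSeries c) k
      = ∑' q : ℤ × ℤ, if q.1 = k then b q.2 * c (q.1 - q.2) else 0 := by
        rw [show trigSeries b * trigSeries c
            = fun x => ∑' q : ℤ × ℤ, b q.2 * c (q.1 - q.2) * fourier q.1 x from
          funext (trigSeries_mul_trigSeries_apply hb hc)]
        exact fourierCoeff_tsum_mul_fourier hsum Prod.fst k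
    _ = ∑' j, b j * c (k - j) := by
        rw [hfiber.tsum_prod' hfiber.prod_factor, tsum_eq_single k fun k' hk' => by simp [hk']]
        simp

lemma mulOp_trigSeries_mul_trigSeries_apply {m : ℤ → ℂ} {C : ℝ} (hm : ∀ k, ‖m k‖ ≤ C)
    {b c : ℤ → ℂ} (hb : Summable (‖b ·‖)) (hc : Summable (‖c ·‖)) (x : 𝕋) :
    mulOp m (trigSeries b * trigSeries c) x
      = ∑' q : ℤ × ℤ, m q.1 * (b q.2 * c (q.1 - q.2)) * fourier q.1 x := by
  have hsum : Summable fun q : ℤ × ℤ => m q.1 * (b q.2 * c (q.1 - q.2)) * fourier q.1 x :=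
    ((summable_norm_mul_norm_shear hb hc).mul_left C).of_norm_bounded fun q => by
      rw [norm_mul, norm_mul, norm_mul, norm_fourier_apply, mul_one]
      exact mul_le_mul_of_nonneg_right (hm _) (by positivity)
  rw [hsum.tsum_prod' hsum.prod_factor]
  refine tsum_congr fun k => ?_
  rw [fc_trigSeries_mul_trigSeries hb hc, ← tsum_mul_left, ← tsum_mul_right]

-- `k² - k₁² - (k - k₁)²` at `q = (k, k₁)`, factored.
def resonance (q : ℤ × ℤ) : ℤ := 2 * q.2 * (q.1 - q.2)

lemma exp_phase_eq_exp_resonance (t : ℝ) (q : ℤ × ℤ) :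
    exp (-(I * t * (q.1 : ℂ) ^ 2)) * (exp (-(I * ((-t : ℝ) : ℂ) * (q.2 : ℂ) ^ 2))
      * exp (-(I * ((-t : ℝ) : ℂ) * ((q.1 - q.2 : ℤ) : ℂ) ^ 2)))
      = exp (-(I * t * resonance q)) := by
  rw [← exp_add, ← exp_add, resonance]
  congr 1
  push_cast
  ring

lemma eitDxx_mul_eitDxx_neg_apply {g : 𝕋 → ℂ} (hg : Summable (‖fc g ·‖)) (t : ℝ) (x : 𝕋) :
    eitDxx t (eitDxx (-t) g * eitDxx (-t) g) x
      = ∑' q : ℤ × ℤ, exp (-(I * t * resonance q)) * (fc g q.2 * fc g (q.1 - q.2))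
          * fourier q.1 x := by
  have hsq : ∀ (s : ℝ) (k : ℤ), ‖exp (-(I * s * (k : ℂ) ^ 2))‖ = 1 := fun s k =>
    norm_exp_neg_I_mul_of_im_eq_zero s (by simp [pow_two])
  have hg' : Summable fun k : ℤ => ‖exp (-(I * ((-t : ℝ) : ℂ) * (k : ℂ) ^ 2)) * fc g k‖ := by
    simpa only [norm_mul, hsq, one_mul] using hg
  have hconj : eitDxx (-t) g
      = trigSeries fun k => exp (-(I * ((-t : ℝ) : ℂ) * (k : ℂ) ^ 2)) * fc g k := rfl
  rw [hconj, eitDxx, mulOp_trigSeries_mul_trigSeries_apply (fun k => (hsq t k).le) hg' hg']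
  refine tsum_congr fun q => ?_
  rw [← exp_phase_eq_exp_resonance]
  ring

lemma norm_exp_resonance_mul_fourier (t : ℝ) (c : ℤ → ℂ) (q : ℤ × ℤ) (x : 𝕋) :
    ‖exp (-(I * t * resonance q)) * (c q.2 * c (q.1 - q.2)) * fourier q.1 x‖
      = ‖c q.2‖ * ‖c (q.1 - q.2)‖ := by
  rw [norm_mul, norm_mul, norm_exp_neg_I_mul_of_im_eq_zero t (intCast_im _), norm_fourier_apply,
    one_mul, mul_one, norm_mul]

lemma intervalIntegral_eitDxx_mul_eitDxx_neg_apply {g : 𝕋 → ℂ} (hg : Summable (‖fc g ·‖))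
    (τ : ℝ) (x : 𝕋) :
    ∫ s in (0 : ℝ)..τ, eitDxx s (eitDxx (-s) g * eitDxx (-s) g) x
      = ∑' q : ℤ × ℤ, (∫ s in (0 : ℝ)..τ, exp (-(I * s * resonance q)))
          * (fc g q.2 * fc g (q.1 - q.2)) * fourier q.1 x := by
  simp only [eitDxx_mul_eitDxx_neg_apply hg]
  rw [intervalIntegral_tsum_of_norm_le (by fun_prop) (summable_norm_mul_norm_shear hg hg)
    (fun q s => (norm_exp_resonance_mul_fourier s _ q x).le)]
  simp only [intervalIntegral.integral_mul_const]

def antiderivCoeff (c : ℤ → ℂ) (k : ℤ) : ℂ := (if k = 0 then 0 else (I * k) ^ (-1 : ℤ)) * c k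

lemma norm_antiderivCoeff_le (c : ℤ → ℂ) (k : ℤ) : ‖antiderivCoeff c k‖ ≤ ‖c k‖ := by
  rw [antiderivCoeff, norm_mul]
  refine mul_le_of_le_one_left (norm_nonneg _) ?_
  split_ifs with hk
  · simp
  · rw [zpow_neg_one, norm_inv, norm_mul, norm_I, one_mul, norm_intCast]
    exact inv_le_one_of_one_le₀ (by exact_mod_cast Int.one_le_abs hk)

lemma intervalIntegral_exp_resonance_mul (τ : ℝ) {c : ℤ → ℂ} (hc : c 0 = 0) (q : ℤ × ℤ) :
    (∫ s in (0 : ℝ)..τ, exp (-(I * s * resonance q))) * (c q.2 * c (q.1 - q.2))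
      = I / 2 * (1 - exp (-(I * τ * resonance q)))
          * (antiderivCoeff c q.2 * antiderivCoeff c (q.1 - q.2)) := by
  obtain ⟨k, j⟩ := q
  by_cases hj : j = 0
  · simp [hj, hc, antiderivCoeff]
  by_cases hkj : k - j = 0
  · simp [hkj, hc, antiderivCoeff]
  have hj' : (j : ℂ) ≠ 0 := Int.cast_ne_zero.mpr hj
  have hkj' : ((k - j : ℤ) : ℂ) ≠ 0 := Int.cast_ne_zero.mpr hkj
  have hR : -(I * resonance (k, j)) ≠ 0 := neg_ne_zero.mpr <| mul_ne_zero I_ne_zero <|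
    Int.cast_ne_zero.mpr <| mul_ne_zero (mul_ne_zero two_ne_zero hj) hkj
  simp only [antiderivCoeff, if_neg hj, if_neg hkj, zpow_neg_one]
  simp_rw [show ∀ s : ℝ, -(I * s * resonance (k, j)) = -(I * resonance (k, j)) * s from
    fun s => by ring]
  rw [integral_exp_mul_complex hR]
  simp only [resonance, ofReal_zero, mul_zero, exp_zero]
  push_cast at hkj' ⊢
  field_simp
  ring

theorem stmt10 (r τ : ℝ) (hr : 1/2 < r) (f : 𝕋 → ℂ) (hf : MemH r f) (h0 : fc f 0 = 0) :
    (fun x : 𝕋 => ∫ s in (0:ℝ)..τ, eitDxx s ((eitDxx (-s) f) * (eitDxx (-s) f)) x)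
      =ᵐ[volume]
    ((Complex.I / 2) • ((Dpow (-1) f * Dpow (-1) f)
      - eitDxx τ ((eitDxx (-τ) (Dpow (-1) f)) * (eitDxx (-τ) (Dpow (-1) f))))) := by
  refine .of_forall fun x => ?_
  have hc : Summable (‖fc f ·‖) := summable_norm_of_summable_sobolev hr hf.2
  set a := antiderivCoeff (fc f)
  have ha : Summable (‖a ·‖) :=
    hc.of_norm_bounded fun k => by simpa using norm_antiderivCoeff_le (fc f) k
  have hDa : Dpow (-1) f = trigSeries a := rfl
  have hfa : fc (Dpow (-1) f) = a := hDa ▸ fc_trigSeries ha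
  have hsum₀ : Summable fun q : ℤ × ℤ => a q.2 * a (q.1 - q.2) * fourier q.1 x :=
    (summable_norm_mul_norm_shear ha ha).of_norm_bounded fun q => by
      rw [norm_mul, norm_mul, norm_fourier_apply, mul_one]
  have hsumτ : Summable fun q : ℤ × ℤ =>
      exp (-(I * τ * resonance q)) * (a q.2 * a (q.1 - q.2)) * fourier q.1 x :=
    ((summable_norm_mul_norm_shear ha ha).congr fun q =>
      (norm_exp_resonance_mul_fourier τ a q x).symm).of_norm
  dsimp only
  rw [Pi.smul_apply, smul_eq_mul, Pi.sub_apply, Pi.mul_apply,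
    intervalIntegral_eitDxx_mul_eitDxx_neg_apply hc, eitDxx_mul_eitDxx_neg_apply (hfa ▸ ha), hfa,
    hDa, trigSeries_mul_trigSeries_apply ha ha, ← hsum₀.tsum_sub hsumτ, ← tsum_mul_left]
  refine tsum_congr fun q => ?_
  rw [intervalIntegral_exp_resonance_mul τ h0]
  ring
end
end
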